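/- Fix 0 < δ < 1 and ε > 0, and suppose a = a(t) satisfies t^{−δ/2+ε} ≤ a(t) ≤ t^{−δ/3−ε} for all large t; set k := t^{δ−1}(1−a). Then there exist C > 0 and t₀ > 0, depending only on δ and ε, such that for all t ≥ t₀ and all λ with t^{δ−1}/(1−t^{δ−1}) ≤ λ ≤ t^{1−δ}−1: | J_{B1}(t;λ) − exp(i t F(1−t^{δ−1};λ) − i ω²)·t^{−1/2}·√(2/(1+λ_c))·∫_{ω}^{ω + a√(λ_c t/2)} e^{iξ²} dξ | ≤ C·t^{−1/2 + 3δ/2}·a⁴, where the Fresnel integral is over the real segment [ω, ω + a√(λ_c t/2)]. -/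

import Mathlib

open MeasureTheory

noncomputable section

/-- `λ_c := t^(δ-1)/(1-t^(δ-1))`. -/
def lamc (δ t : ℝ) : ℝ := t ^ (δ - 1) / (1 - t ^ (δ - 1))

/-- `ω := √(λ_c t/2)·ln(1+Λ)/(1+λ_c)` with `1+Λ = λ/λ_c`. -/
def omegL (δ t lam : ℝ) : ℝ :=
  Real.sqrt (lamc δ t * t / 2) * Real.log (lam / lamc δ t) / (1 + lamc δ t)

/-- The real-valued phase `F(x;λ) := (1−x)·ln(1−x) + x·ln x + x·ln λ`. -/
def Freal (lam x : ℝ) : ℝ :=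
  (1 - x) * Real.log (1 - x) + x * Real.log x + x * Real.log lam

/-- `J_{B1}(t;λ) := ∫_{1−t^{δ−1}}^{1−k} (1−x)^{−1/2}·e^{i t F(x;λ)} dx`. -/
def JB1 (δ t lam k : ℝ) : ℂ :=
  ∫ x in (1 - t ^ (δ - 1))..(1 - k),
    (((1 - x) ^ (-(1 : ℝ) / 2) : ℝ) : ℂ) *
      Complex.exp (Complex.I * (t : ℂ) * ((Freal lam x : ℝ) : ℂ))

open Real Set

/-!
Write `u = t^(δ-1)` and `x₀ = 1 - u`; the integral runs over `[x₀, x₀ + u a]`. The substitution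
`ξ = ω + √(λ_c t / 2) (x - x₀) / u` turns the Fresnel term into `∫ u^(-1/2) e^{i t Q(x)} dx`
over the same interval, where `Q` is the second-order Taylor polynomial of `F` at `x₀`.
On that interval the amplitudes `(1-x)^(-1/2)` and `u^(-1/2)` differ by a relative `2a`, and,
since `1 - x ≥ u/2`, the cubic Taylor remainder of `F = ψ(x) + ψ(1-x) + x log λ`
(`ψ(z) = z log z`, whose third derivative is `-1/z²`) is at most `8 u a³`. Integrating over a
length `u a` gives `u^(1/2) (2a² + 8 t u a⁴)`, and `a² ≥ t^(-δ)` turns this into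
`10 t^(-1/2 + 3δ/2) a⁴`.
-/

lemma abs_le_mul_abs_sub_of_hasDerivAt {f f' : ℝ → ℝ} {b y C : ℝ} (hfb : f b = 0)
    (hf : ∀ z ∈ uIcc b y, HasDerivAt f (f' z) z) (hC : ∀ z ∈ uIcc b y, |f' z| ≤ C) :
    |f y| ≤ C * |y - b| := by
  simpa [hfb] using Convex.norm_image_sub_le_of_norm_hasDerivWithin_le
    (fun z hz => (hf z hz).hasDerivWithinAt) hC (convex_uIcc b y) left_mem_uIcc right_mem_uIcc

lemma abs_mul_log_sub_taylor_le {m b y : ℝ} (hm : 0 < m) (hb : m ≤ b) (hy : m ≤ y) :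
    |y * log y - b * log b - (log b + 1) * (y - b) - (y - b) ^ 2 / (2 * b)|
      ≤ |y - b| ^ 3 / m ^ 2 := by
  have hmem : ∀ z ∈ uIcc b y, m ≤ z := fun z hz => (le_min hb hy).trans hz.1
  have hb0 : 0 < b := hm.trans_le hb
  have hderiv : ∀ z ∈ uIcc b y, |log z - log b - (z - b) / b| ≤ |y - b| ^ 2 / m ^ 2 := by
    intro z hz
    have hsub : uIcc b z ⊆ uIcc b y := uIcc_subset_uIcc left_mem_uIcc hz
    calc |log z - log b - (z - b) / b|
        ≤ |y - b| / m ^ 2 * |z - b| := by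
          refine abs_le_mul_abs_sub_of_hasDerivAt (f := fun w => log w - log b - (w - b) / b)
            (f' := fun w => w⁻¹ - 1 / b) (by simp)
            (fun w hw => ?_) (fun w hw => ?_)
          · have hw0 : 0 < w := hm.trans_le (hmem w (hsub hw))
            exact ((hasDerivAt_log hw0.ne').sub_const _).sub
              (((hasDerivAt_id w).sub_const b).div_const b) |>.congr_deriv (by simp)
          · have hw0 : 0 < w := hm.trans_le (hmem w (hsub hw))
            have hmw : m ^ 2 ≤ w * b := by nlinarith [hmem w (hsub hw)]
            rw [show w⁻¹ - 1 / b = (b - w) / (w * b) by field_simp, abs_div,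
              abs_of_pos (mul_pos hw0 hb0), abs_sub_comm]
            exact div_le_div₀ (abs_nonneg _) ((abs_sub_left_of_mem_uIcc hw).trans
              (abs_sub_left_of_mem_uIcc hz)) (by positivity) hmw
      _ ≤ |y - b| / m ^ 2 * |y - b| :=
          mul_le_mul_of_nonneg_left (abs_sub_left_of_mem_uIcc hz) (by positivity)
      _ = |y - b| ^ 2 / m ^ 2 := by ring
  calc _ ≤ |y - b| ^ 2 / m ^ 2 * |y - b| := by
        refine abs_le_mul_abs_sub_of_hasDerivAt
          (f := fun z => z * log z - b * log b - (log b + 1) * (z - b) - (z - b) ^ 2 / (2 * b))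
          (f' := fun z => log z - log b - (z - b) / b)
          (by simp) (fun z hz => ?_) hderiv
        have hz0 : 0 < z := hm.trans_le (hmem z hz)
        have h := ((((hasDerivAt_id z).mul (hasDerivAt_log hz0.ne')).sub_const (b * log b)).sub
          (((hasDerivAt_id z).sub_const b).const_mul (log b + 1))).sub
          ((((hasDerivAt_id z).sub_const b).pow 2).div_const (2 * b))
        refine h.congr_deriv ?_
        simp only [id, Nat.cast_ofNat]
        field_simp
        ring
    _ = |y - b| ^ 3 / m ^ 2 := by ring

lemma norm_cexp_I_mul_sub_le (α β : ℝ) :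
    ‖Complex.exp (Complex.I * α) - Complex.exp (Complex.I * β)‖ ≤ |α - β| := by
  have h : Complex.exp (Complex.I * α) - Complex.exp (Complex.I * β)
      = Complex.exp (Complex.I * β) * (Complex.exp (Complex.I * ↑(α - β)) - 1) := by
    rw [mul_sub, mul_one, ← Complex.exp_add]; push_cast; ring_nf
  rw [h, norm_mul, Complex.norm_exp_I_mul_ofReal, one_mul, ← Real.norm_eq_abs]
  exact Real.norm_exp_I_mul_ofReal_sub_one_le

lemma norm_ofReal_mul_cexp_sub_le (A B α β : ℝ) :
    ‖(A : ℂ) * Complex.exp (Complex.I * α) - (B : ℂ) * Complex.exp (Complex.I * β)‖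
      ≤ |A - B| + |B| * |α - β| := by
  rw [show (A : ℂ) * Complex.exp (Complex.I * α) - (B : ℂ) * Complex.exp (Complex.I * β)
      = ((A - B : ℝ) : ℂ) * Complex.exp (Complex.I * α)
        + (B : ℂ) * (Complex.exp (Complex.I * α) - Complex.exp (Complex.I * β)) by push_cast; ring]
  refine (norm_add_le _ _).trans (add_le_add ?_ ?_)
  · rw [norm_mul, Complex.norm_exp_I_mul_ofReal, mul_one, Complex.norm_real, Real.norm_eq_abs]
  · rw [norm_mul, Complex.norm_real, Real.norm_eq_abs]
    exact mul_le_mul_of_nonneg_left (norm_cexp_I_mul_sub_le α β) (abs_nonneg B)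

lemma abs_rpow_neg_half_sub_le {u y a : ℝ} (hu : 0 < u) (ha0 : 0 < a) (ha : a ≤ 1 / 2)
    (hy : u * (1 - a) ≤ y) (hyu : y ≤ u) :
    |y ^ (-(1 : ℝ) / 2) - u ^ (-(1 : ℝ) / 2)| ≤ 2 * a * u ^ (-(1 : ℝ) / 2) := by
  have hy0 : 0 < y := (mul_pos hu (by linarith)).trans_le hy
  have hmono : ∀ {p q : ℝ}, 0 < p → p ≤ q → q ^ (-(1 : ℝ) / 2) ≤ p ^ (-(1 : ℝ) / 2) :=
    fun hp hpq => rpow_le_rpow_of_nonpos hp hpq (by norm_num)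
  have h1a : (1 - a) ^ (-(1 : ℝ) / 2) ≤ 1 + 2 * a :=
    calc (1 - a) ^ (-(1 : ℝ) / 2) ≤ (1 - a) ^ (-1 : ℝ) :=
          rpow_le_rpow_of_exponent_ge (by linarith) (by linarith) (by norm_num)
      _ ≤ 1 + 2 * a := by
          rw [rpow_neg_one, inv_le_iff_one_le_mul₀ (by linarith)]; nlinarith
  rw [abs_of_nonneg (sub_nonneg.2 (hmono hy0 hyu))]
  calc y ^ (-(1 : ℝ) / 2) - u ^ (-(1 : ℝ) / 2)
      ≤ (u * (1 - a)) ^ (-(1 : ℝ) / 2) - u ^ (-(1 : ℝ) / 2) :=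
        sub_le_sub_right (hmono (mul_pos hu (by linarith)) hy) _
    _ = u ^ (-(1 : ℝ) / 2) * ((1 - a) ^ (-(1 : ℝ) / 2) - 1) := by
        rw [mul_rpow hu.le (by linarith)]; ring
    _ ≤ 2 * a * u ^ (-(1 : ℝ) / 2) := by
        nlinarith [rpow_pos_of_pos hu (-(1 : ℝ) / 2)]

lemma rpow_neg_le_half {t e : ℝ} (he : 0 < e) (ht : (2 : ℝ) ^ (1 / e) ≤ t) :
    t ^ (-e) ≤ 1 / 2 := by
  have h2 : 2 ≤ t ^ e :=
    calc (2 : ℝ) = ((2 : ℝ) ^ (1 / e)) ^ e := by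
          rw [← rpow_mul zero_le_two, one_div_mul_cancel he.ne', rpow_one]
      _ ≤ t ^ e := rpow_le_rpow (by positivity) ht he.le
  rw [rpow_neg ((rpow_pos_of_pos two_pos _).le.trans ht), one_div]
  exact inv_anti₀ two_pos h2

-- The second-order Taylor polynomial of `Freal lam` at `x₀`.
def FrealQuad (lam x₀ x : ℝ) : ℝ :=
  Freal lam x₀ + (log x₀ - log (1 - x₀) + log lam) * (x - x₀)
    + (x - x₀) ^ 2 / (2 * x₀ * (1 - x₀))

lemma abs_Freal_sub_FrealQuad_le {m lam x₀ x : ℝ} (hm : 0 < m) (hx₀ : m ≤ x₀) (hx : m ≤ x)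
    (hx₀' : m ≤ 1 - x₀) (hx' : m ≤ 1 - x) :
    |Freal lam x - FrealQuad lam x₀ x| ≤ 2 * |x - x₀| ^ 3 / m ^ 2 := by
  have hsplit : Freal lam x - FrealQuad lam x₀ x
      = (x * log x - x₀ * log x₀ - (log x₀ + 1) * (x - x₀) - (x - x₀) ^ 2 / (2 * x₀))
        + ((1 - x) * log (1 - x) - (1 - x₀) * log (1 - x₀)
          - (log (1 - x₀) + 1) * ((1 - x) - (1 - x₀))
          - ((1 - x) - (1 - x₀)) ^ 2 / (2 * (1 - x₀))) := by
    have : x₀ ≠ 0 := (hm.trans_le hx₀).ne'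
    have : 1 - x₀ ≠ 0 := (hm.trans_le hx₀').ne'
    unfold FrealQuad Freal
    field_simp
    ring
  have h₁ := abs_mul_log_sub_taylor_le hm hx₀ hx
  have h₂ := abs_mul_log_sub_taylor_le hm hx₀' hx'
  rw [hsplit]
  calc _ ≤ _ + _ := abs_add_le _ _
    _ ≤ |x - x₀| ^ 3 / m ^ 2 + |x - x₀| ^ 3 / m ^ 2 :=
        add_le_add h₁ (h₂.trans_eq (by rw [show 1 - x - (1 - x₀) = -(x - x₀) by ring, abs_neg]))
    _ = 2 * |x - x₀| ^ 3 / m ^ 2 := by ring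

def JB1Leading (δ t lam a : ℝ) : ℂ :=
  Complex.exp (Complex.I * (t : ℂ) * ((Freal lam (1 - t ^ (δ - 1)) : ℝ) : ℂ) -
      Complex.I * ((omegL δ t lam : ℝ) : ℂ) ^ 2) *
    ((t ^ (-(1 : ℝ) / 2) : ℝ) : ℂ) * ((Real.sqrt (2 / (1 + lamc δ t)) : ℝ) : ℂ) *
    ∫ ξ in omegL δ t lam..(omegL δ t lam + a * Real.sqrt (lamc δ t * t / 2)),
      Complex.exp (Complex.I * (ξ : ℂ) ^ 2)

-- The Jacobian of the substitution `ξ = ω + c (x - (1 - t^(δ-1)))` behind the Fresnel term.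
def fresnelScale (δ t : ℝ) : ℝ := Real.sqrt (lamc δ t * t / 2) / t ^ (δ - 1)

-- Completing the square: `2 ω c = t F'(x₀)` and `c² = t F''(x₀) / 2`.
lemma mul_FrealQuad_eq {δ t lam : ℝ} (ht : 0 < t) (hu : t ^ (δ - 1) < 1) (hlam : 0 < lam)
    (x : ℝ) :
    t * FrealQuad lam (1 - t ^ (δ - 1)) x = t * Freal lam (1 - t ^ (δ - 1)) - omegL δ t lam ^ 2
      + (omegL δ t lam + fresnelScale δ t * (x - (1 - t ^ (δ - 1)))) ^ 2 := by
  set u := t ^ (δ - 1)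
  have hu0 : 0 < u := rpow_pos_of_pos ht _
  have h1u : 0 < 1 - u := by linarith
  have hlc : lamc δ t = u / (1 - u) := rfl
  have hlc0 : 0 < lamc δ t := div_pos hu0 h1u
  set s := Real.sqrt (lamc δ t * t / 2)
  have hs2 : s ^ 2 = lamc δ t * t / 2 := sq_sqrt (by positivity)
  have hω : omegL δ t lam = s * log (lam / lamc δ t) / (1 + lamc δ t) := rfl
  have hc : fresnelScale δ t = s / u := rfl
  have h2ωc : 2 * omegL δ t lam * fresnelScale δ t = t * (log (1 - u) - log u + log lam) := by
    rw [hω, hc, log_div hlam.ne' hlc0.ne', hlc, log_div hu0.ne' h1u.ne']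
    field_simp
    rw [hs2, hlc]
    field_simp
    ring
  have hc2 : fresnelScale δ t ^ 2 = t / (2 * (1 - u) * u) := by
    rw [hc, div_pow, hs2, hlc]
    field_simp
  simp only [FrealQuad, sub_sub_cancel]
  linear_combination (1 - u - x) * h2ωc - (x - (1 - u)) ^ 2 * hc2

lemma rpow_neg_half_mul_fresnelScale {δ t : ℝ} (ht : 0 < t) (hu : t ^ (δ - 1) < 1) :
    t ^ (-(1 : ℝ) / 2) * Real.sqrt (2 / (1 + lamc δ t)) * fresnelScale δ t
      = (t ^ (δ - 1)) ^ (-(1 : ℝ) / 2) := by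
  set u := t ^ (δ - 1)
  have hu0 : 0 < u := rpow_pos_of_pos ht _
  have hsq : Real.sqrt (2 / (1 + lamc δ t)) * Real.sqrt (lamc δ t * t / 2)
      = Real.sqrt u * Real.sqrt t := by
    have h1u : 1 - u ≠ 0 := by linarith
    have hlc0 : 0 < lamc δ t := div_pos hu0 (by linarith)
    rw [← Real.sqrt_mul (div_pos two_pos (by linarith)).le, ← Real.sqrt_mul hu0.le,
      show lamc δ t = u / (1 - u) from rfl]
    congr 1
    field_simp
    ring
  have hneg : ∀ {w : ℝ}, 0 < w → w ^ (-(1 : ℝ) / 2) = (Real.sqrt w)⁻¹ := fun hw => by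
    rw [neg_div, rpow_neg hw.le, Real.sqrt_eq_rpow, one_div]
  have : 0 < Real.sqrt t := Real.sqrt_pos.2 ht
  have : 0 < Real.sqrt u := Real.sqrt_pos.2 hu0
  calc _ = (Real.sqrt t)⁻¹
        * (Real.sqrt (2 / (1 + lamc δ t)) * Real.sqrt (lamc δ t * t / 2)) / u := by
        rw [hneg ht, show fresnelScale δ t = Real.sqrt (lamc δ t * t / 2) / u from rfl]; ring
    _ = u ^ (-(1 : ℝ) / 2) := by
        rw [hsq, hneg hu0]
        field_simp
        exact Real.sq_sqrt hu0.le

lemma JB1Leading_eq_integral {δ t lam a : ℝ} (ht : 0 < t) (hu : t ^ (δ - 1) < 1)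
    (hlam : 0 < lam) :
    JB1Leading δ t lam a = ∫ x in (1 - t ^ (δ - 1))..(1 - t ^ (δ - 1) * (1 - a)),
        (((t ^ (δ - 1)) ^ (-(1 : ℝ) / 2) : ℝ) : ℂ) *
          Complex.exp (Complex.I * (t : ℂ) * ((FrealQuad lam (1 - t ^ (δ - 1)) x : ℝ) : ℂ)) := by
  set u := t ^ (δ - 1)
  set ω := omegL δ t lam
  set c := fresnelScale δ t
  have hcu : c * u = Real.sqrt (lamc δ t * t / 2) :=
    div_mul_cancel₀ _ (rpow_pos_of_pos ht _).ne'
  have hfresnel : ∫ ξ in ω..(ω + a * Real.sqrt (lamc δ t * t / 2)),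
        Complex.exp (Complex.I * (ξ : ℂ) ^ 2)
      = c • ∫ x in (1 - u)..(1 - u * (1 - a)),
          Complex.exp (Complex.I * ((ω - c * (1 - u) + c * x : ℝ) : ℂ) ^ 2) := by
    rw [intervalIntegral.smul_integral_comp_add_mul
      (fun ξ : ℝ => Complex.exp (Complex.I * (ξ : ℂ) ^ 2))]
    congr 1
    · ring
    · linear_combination (-a) * hcu
  rw [JB1Leading, hfresnel, Complex.real_smul, ← mul_assoc, ← intervalIntegral.integral_const_mul]
  refine intervalIntegral.integral_congr fun x _ => ?_
  have hexp : Complex.exp (Complex.I * (t : ℂ) * ((Freal lam (1 - u) : ℝ) : ℂ) -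
        Complex.I * (ω : ℂ) ^ 2) *
      Complex.exp (Complex.I * ((ω - c * (1 - u) + c * x : ℝ) : ℂ) ^ 2)
      = Complex.exp (Complex.I * (t : ℂ) * ((FrealQuad lam (1 - u) x : ℝ) : ℂ)) := by
    rw [← Complex.exp_add]
    congr 1
    have := congrArg (fun r : ℝ => (r : ℂ)) (mul_FrealQuad_eq ht hu hlam x)
    push_cast at this ⊢
    linear_combination (-Complex.I) * this
  rw [← rpow_neg_half_mul_fresnelScale ht hu, ← hexp]
  push_cast
  ring

lemma intervalIntegrable_JB1_integrand {t lam p q : ℝ} (hp : 0 < p) (hpq : p ≤ q) (hq : q < 1) :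
    IntervalIntegrable (fun x : ℝ => (((1 - x) ^ (-(1 : ℝ) / 2) : ℝ) : ℂ) *
      Complex.exp (Complex.I * (t : ℂ) * ((Freal lam x : ℝ) : ℂ))) volume p q := by
  refine (continuousOn_of_forall_continuousAt fun x hx => ?_).intervalIntegrable
  rw [uIcc_of_le hpq] at hx
  have hx0 : x ≠ 0 := by linarith [hx.1]
  have hx1 : 1 - x ≠ 0 := by linarith [hx.2]
  unfold Freal
  fun_prop (disch := first | assumption | exact Or.inl hx1)

lemma norm_JB1_integrand_sub_le {t lam u a x : ℝ} (ht : 0 < t) (hu0 : 0 < u) (hu : u ≤ 1 / 2)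
    (ha0 : 0 < a) (ha : a ≤ 1 / 2) (hx₁ : 1 - u ≤ x) (hx₂ : x ≤ 1 - u * (1 - a)) :
    ‖(((1 - x) ^ (-(1 : ℝ) / 2) : ℝ) : ℂ) *
          Complex.exp (Complex.I * (t : ℂ) * ((Freal lam x : ℝ) : ℂ)) -
        ((u ^ (-(1 : ℝ) / 2) : ℝ) : ℂ) *
          Complex.exp (Complex.I * (t : ℂ) * ((FrealQuad lam (1 - u) x : ℝ) : ℂ))‖
      ≤ u ^ (-(1 : ℝ) / 2) * (2 * a + 8 * t * u * a ^ 3) := by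
  have hdist : |x - (1 - u)| ^ 3 ≤ (u * a) ^ 3 :=
    pow_le_pow_left₀ (abs_nonneg _) (by rw [abs_le]; constructor <;> nlinarith) 3
  have hamp := abs_rpow_neg_half_sub_le hu0 ha0 ha (y := 1 - x) (by linarith) (by linarith)
  have hphase : |Freal lam x - FrealQuad lam (1 - u) x| ≤ 8 * u * a ^ 3 := by
    refine (abs_Freal_sub_FrealQuad_le (m := u / 2) (by positivity)
      (by linarith) (by linarith) (by linarith) (by nlinarith)).trans ?_
    rw [div_le_iff₀ (by positivity)]
    nlinarith
  have hB : 0 ≤ u ^ (-(1 : ℝ) / 2) := (rpow_pos_of_pos hu0 _).le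
  simp only [mul_assoc Complex.I, ← Complex.ofReal_mul]
  calc _ ≤ |(1 - x) ^ (-(1 : ℝ) / 2) - u ^ (-(1 : ℝ) / 2)| + |u ^ (-(1 : ℝ) / 2)|
          * |t * Freal lam x - t * FrealQuad lam (1 - u) x| :=
        norm_ofReal_mul_cexp_sub_le _ _ _ _
    _ ≤ 2 * a * u ^ (-(1 : ℝ) / 2) + u ^ (-(1 : ℝ) / 2) * (t * (8 * u * a ^ 3)) := by
        rw [abs_of_nonneg hB, ← mul_sub, abs_mul, abs_of_pos ht]
        gcongr
    _ = u ^ (-(1 : ℝ) / 2) * (2 * a + 8 * t * u * a ^ 3) := by ring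

lemma norm_JB1_sub_JB1Leading_le {δ t lam a : ℝ} (ht : 0 < t) (hu : t ^ (δ - 1) ≤ 1 / 2)
    (ha0 : 0 < a) (ha : a ≤ 1 / 2) (hlam : 0 < lam) :
    ‖JB1 δ t lam (t ^ (δ - 1) * (1 - a)) - JB1Leading δ t lam a‖
      ≤ (t ^ (δ - 1)) ^ (-(1 : ℝ) / 2) * (2 * a + 8 * t * t ^ (δ - 1) * a ^ 3)
          * (t ^ (δ - 1) * a) := by
  set u := t ^ (δ - 1)
  have hu0 : 0 < u := rpow_pos_of_pos ht _
  have hle : 1 - u ≤ 1 - u * (1 - a) := by nlinarith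
  rw [JB1Leading_eq_integral ht (by linarith) hlam, JB1, ← intervalIntegral.integral_sub
    (intervalIntegrable_JB1_integrand (by linarith) hle (by nlinarith))
    (Continuous.intervalIntegrable (by unfold FrealQuad; fun_prop) _ _)]
  refine (intervalIntegral.norm_integral_le_of_norm_le_const
    (C := u ^ (-(1 : ℝ) / 2) * (2 * a + 8 * t * u * a ^ 3)) fun x hx => ?_).trans_eq ?_
  · rw [uIoc_of_le hle] at hx
    exact norm_JB1_integrand_sub_le ht hu0 hu ha0 ha hx.1.le hx.2
  · rw [abs_of_nonneg (by linarith)]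
    ring

lemma error_term_le_rpow {δ t a : ℝ} (ht : 0 < t) (ha : t ^ (-δ / 2) ≤ a) :
    (t ^ (δ - 1)) ^ (-(1 : ℝ) / 2) * (2 * a + 8 * t * t ^ (δ - 1) * a ^ 3) * (t ^ (δ - 1) * a)
      ≤ 10 * t ^ (-(1 : ℝ) / 2 + 3 * δ / 2) * a ^ 4 := by
  set P := t ^ (-(1 : ℝ) / 2 + 3 * δ / 2)
  have hP : 0 < P := rpow_pos_of_pos ht _
  have hsqrt : (t ^ (δ - 1)) ^ (-(1 : ℝ) / 2) * t ^ (δ - 1) = P * t ^ (-δ) := by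
    rw [← rpow_mul ht.le, ← rpow_add ht, ← rpow_add ht]
    ring_nf
  have htu : t * t ^ (δ - 1) = t ^ δ := by
    conv_rhs => rw [show δ = 1 + (δ - 1) by ring, rpow_add ht, rpow_one]
  have hmain : (t ^ (δ - 1)) ^ (-(1 : ℝ) / 2) * t ^ (δ - 1) * (t * t ^ (δ - 1)) = P := by
    rw [hsqrt, htu, mul_assoc, ← rpow_add ht, neg_add_cancel, rpow_zero, mul_one]
  have hδa : t ^ (-δ) ≤ a ^ 2 := by
    rw [show -δ = -δ / 2 * 2 by ring, rpow_mul ht.le, rpow_two]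
    exact pow_le_pow_left₀ (rpow_nonneg ht.le _) ha 2
  calc _ = (t ^ (δ - 1)) ^ (-(1 : ℝ) / 2) * t ^ (δ - 1) * (2 * a ^ 2)
        + (t ^ (δ - 1)) ^ (-(1 : ℝ) / 2) * t ^ (δ - 1) * (t * t ^ (δ - 1)) * (8 * a ^ 4) := by ring
    _ = P * (2 * (t ^ (-δ) * a ^ 2)) + P * (8 * a ^ 4) := by rw [hmain, hsqrt]; ring
    _ ≤ P * (2 * (a ^ 2 * a ^ 2)) + P * (8 * a ^ 4) := by gcongr
    _ = 10 * P * a ^ 4 := by ring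

/-- leading-order asymptotics of `J_{B1}` with uniform error bound. -/
theorem stmt_18 (δ ε : ℝ) (hδ0 : 0 < δ) (hδ1 : δ < 1) (hε : 0 < ε) :
    ∃ C > 0, ∃ t₀ > 0, ∀ t ≥ t₀, ∀ a : ℝ,
      t ^ (-δ / 2 + ε) ≤ a → a ≤ t ^ (-δ / 3 - ε) →
      ∀ lam : ℝ, t ^ (δ - 1) / (1 - t ^ (δ - 1)) ≤ lam → lam ≤ t ^ (1 - δ) - 1 →
      ‖JB1 δ t lam (t ^ (δ - 1) * (1 - a)) -
          Complex.exp (Complex.I * (t : ℂ) * ((Freal lam (1 - t ^ (δ - 1)) : ℝ) : ℂ) -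
              Complex.I * ((omegL δ t lam : ℝ) : ℂ) ^ 2) *
            ((t ^ (-(1 : ℝ) / 2) : ℝ) : ℂ) * ((Real.sqrt (2 / (1 + lamc δ t)) : ℝ) : ℂ) *
            ∫ ξ in omegL δ t lam..(omegL δ t lam + a * Real.sqrt (lamc δ t * t / 2)),
              Complex.exp (Complex.I * (ξ : ℂ) ^ 2)‖ ≤
        C * t ^ (-(1 : ℝ) / 2 + 3 * δ / 2) * a ^ 4 := by
  refine ⟨10, by norm_num, 2 ^ max (1 / (1 - δ)) (1 / (δ / 3)), by positivity, ?_⟩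
  intro t ht a ha₁ ha₂ lam hlam _
  have ht₀ : ∀ {e}, e ≤ max (1 / (1 - δ)) (1 / (δ / 3)) → (2 : ℝ) ^ e ≤ t := fun he =>
    (rpow_le_rpow_of_exponent_le one_le_two he).trans ht
  have ht1 : 1 ≤ t := (one_le_rpow one_le_two (by positivity)).trans (ht₀ le_rfl)
  have hu : t ^ (δ - 1) ≤ 1 / 2 := by
    rw [← neg_sub]; exact rpow_neg_le_half (by linarith) (ht₀ (le_max_left _ _))
  have ha0 : 0 < a := (rpow_pos_of_pos (by linarith) _).trans_le ha₁
  have ha : a ≤ 1 / 2 := ha₂.trans <| (rpow_le_rpow_of_exponent_le ht1 (by linarith)).trans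
    (rpow_neg_le_half (by positivity) (ht₀ (le_max_right _ _)))
  have ha_low : t ^ (-δ / 2) ≤ a := (rpow_le_rpow_of_exponent_le ht1 (by linarith)).trans ha₁
  have hlam0 : 0 < lam := lt_of_lt_of_le (div_pos (rpow_pos_of_pos (by linarith) _)
    (by linarith)) hlam
  exact (norm_JB1_sub_JB1Leading_le (by linarith) hu ha0 ha hlam0).trans
    (error_term_le_rpow (by linarith) ha_low)
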